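/- Let a > 0 and let (b_n)_{n∈ℤ} be complex numbers with ∑_{n∈ℤ} |b_n|² e^{−2a²} I_{|n|}(2a²) ≤ 1, so that the function h(t) = Re( ∑_{n∈ℤ} b_n e^{−2a²} I_{|n|}(2a²) e^{−2πint} ) is a generic element of the unit ball of the RKHS of the SEP Gaussian process with rescaling factor a. Then |h(0)| ≤ 1, and |h(t) − h(0)| ≤ 2√2 · π · a · t for every t ∈ [0, 1]. (Lemma 'constant.rkhs' of the paper.) -/

import Mathlib

/-!
With `x = 2a²`, the weights `c n = e^{-x} I_{|n|}(x)` are the law of the difference of two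
independent Poisson(`x/2`) variables: the bijection `(p, q) ↦ (q - p, min p q)` from `ℕ × ℕ` onto
`ℤ × ℕ` turns the double series `∑ₙ f n I_{|n|}(x)` into `∑_{p,q} f (q - p) (x/2)^{p+q} / (p! q!)`,
so `∑ c n = 1` and `∑ n² c n = x` (mean zero, variance `x`). Cauchy–Schwarz against these weights
gives `∑ ‖b n‖ c n ≤ 1`, which bounds `h 0`, and `∑ |n| ‖b n‖ c n ≤ √2 a`, which together with
`|e^{iθ} - e^{iθ'}| ≤ |θ - θ'|` makes `h` Lipschitz with constant `2√2 π a`.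
-/

open Real

/-- The modified Bessel function of the first kind of nonnegative integer order `n`,
defined by the everywhere-convergent series
`I_n(x) = ∑_{j=0}^∞ (x/2)^(2j+n) / (j! (j+n)!)`. -/
noncomputable def besselI (n : ℕ) (x : ℝ) : ℝ :=
  ∑' j : ℕ, (x / 2) ^ (2 * j + n) / ((Nat.factorial j : ℝ) * (Nat.factorial (j + n) : ℝ))

section

open scoped Nat

theorem hasSum_natCast_mul_of_hasSum_succ {g : ℕ → ℝ} {y s : ℝ}
    (h : HasSum (fun p => g (p + 1) * y ^ p / p !) s) :
    HasSum (fun p => p * g p * y ^ p / p !) (y * s) := by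
  refine (hasSum_nat_add_iff' 1).mp ?_
  simp only [Finset.sum_range_one, CharP.cast_eq_zero, zero_mul, zero_div, sub_zero]
  refine (h.mul_left y).congr_fun fun p => ?_
  rw [Nat.factorial_succ]
  push_cast
  field_simp
  ring

theorem hasSum_pow_div_factorial (y : ℝ) : HasSum (fun p : ℕ => y ^ p / p !) (exp y) := by
  simpa [Real.exp_eq_exp_ℝ] using NormedSpace.expSeries_div_hasSum_exp y

theorem hasSum_natCast_mul_pow_div_factorial (y : ℝ) :
    HasSum (fun p : ℕ => p * y ^ p / p !) (y * exp y) := by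
  simpa using hasSum_natCast_mul_of_hasSum_succ (g := fun _ => 1)
    (by simpa using hasSum_pow_div_factorial y)

theorem hasSum_natCast_sq_mul_pow_div_factorial (y : ℝ) :
    HasSum (fun p : ℕ => (p : ℝ) ^ 2 * y ^ p / p !) (y * (y + 1) * exp y) := by
  have h := hasSum_natCast_mul_of_hasSum_succ (g := fun p => (p : ℝ))
    (by simpa [add_mul, add_div] using
      (hasSum_natCast_mul_pow_div_factorial y).add (hasSum_pow_div_factorial y))
  simpa [sq, mul_add, add_mul, mul_assoc] using h

theorem HasSum.mul_of_nonneg {ι ι' : Type*} {f : ι → ℝ} {g : ι' → ℝ} {s t : ℝ}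
    (hf : HasSum f s) (hg : HasSum g t) (hf0 : 0 ≤ f) (hg0 : 0 ≤ g) :
    HasSum (fun z : ι × ι' => f z.1 * g z.2) (s * t) :=
  hf.mul hg (hf.summable.mul_of_nonneg hg.summable hf0 hg0)

theorem hasSum_pow_add_div_factorial_mul_factorial {x : ℝ} (hx : 0 ≤ x) :
    HasSum (fun z : ℕ × ℕ => (x / 2) ^ (z.1 + z.2) / (z.1 ! * z.2 !)) (exp x) := by
  have h := (hasSum_pow_div_factorial (x / 2)).mul_of_nonneg (hasSum_pow_div_factorial (x / 2))
    (fun p => by positivity) (fun p => by positivity)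
  rw [← exp_add, add_halves] at h
  refine h.congr_fun fun z => ?_
  rw [pow_add, mul_div_mul_comm]

theorem hasSum_sub_sq_mul_pow_add_div_factorial_mul_factorial {x : ℝ} (hx : 0 ≤ x) :
    HasSum (fun z : ℕ × ℕ => ((z.1 : ℝ) - z.2) ^ 2 * (x / 2) ^ (z.1 + z.2) / (z.1 ! * z.2 !))
      (x * exp x) := by
  set y := x / 2
  -- `(p - q)² = p² + q² - 2pq`, and the sum is `2 y (y + 1) e^{2y} - 2 y² e^{2y} = x eˣ`
  have h0 := hasSum_pow_div_factorial y
  have h1 := hasSum_natCast_mul_pow_div_factorial y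
  have h2 := hasSum_natCast_sq_mul_pow_div_factorial y
  have hsq := (h2.mul_of_nonneg h0 (fun p => by positivity) (fun p => by positivity)).add
    ((h0.mul_of_nonneg h2 (fun p => by positivity) (fun p => by positivity)).sub
      ((h1.mul_of_nonneg h1 (fun p => by positivity) (fun p => by positivity)).mul_left 2))
  convert hsq using 1
  · ext z
    rw [pow_add]
    field_simp
    ring
  · rw [show x = y + y by ring, exp_add]
    ring

def subMinEquiv : ℕ × ℕ ≃ ℤ × ℕ where
  toFun z := ((z.2 : ℤ) - z.1, min z.1 z.2)
  invFun w := (w.2 + (-w.1).toNat, w.2 + w.1.toNat)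
  left_inv z := by ext <;> simp <;> omega
  right_inv w := by ext <;> simp; omega

theorem hasSum_mul_besselI_natAbs {x s : ℝ} (f : ℤ → ℝ)
    (h : HasSum (fun z : ℕ × ℕ => f (z.2 - z.1) * ((x / 2) ^ (z.1 + z.2) / (z.1 ! * z.2 !))) s) :
    HasSum (fun n : ℤ => f n * besselI n.natAbs x) s := by
  set T : ℤ × ℕ → ℝ := fun w =>
    f w.1 * ((x / 2) ^ (2 * w.2 + w.1.natAbs) / (w.2 ! * (w.2 + w.1.natAbs)!))
  have hT : HasSum T s := by
    rw [← subMinEquiv.hasSum_iff]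
    refine h.congr_fun fun ⟨p, q⟩ => ?_
    simp only [T, subMinEquiv, Equiv.coe_fn_mk, Function.comp_apply]
    rcases le_total p q with hpq | hqp
    · rw [show 2 * min p q + ((q : ℤ) - p).natAbs = p + q by omega,
        show min p q + ((q : ℤ) - p).natAbs = q by omega, min_eq_left hpq]
    · rw [show 2 * min p q + ((q : ℤ) - p).natAbs = p + q by omega,
        show min p q + ((q : ℤ) - p).natAbs = p by omega, min_eq_right hqp, mul_comm (q ! : ℝ)]
  refine hT.prod_fiberwise fun n => ?_
  have hfiber := (hT.summable.prod_factor n).hasSum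
  simp only [T, tsum_mul_left] at hfiber
  exact hfiber

end

theorem besselI_nonneg (n : ℕ) {x : ℝ} (hx : 0 ≤ x) : 0 ≤ besselI n x :=
  tsum_nonneg fun j => by positivity

theorem hasSum_besselI_natAbs {x : ℝ} (hx : 0 ≤ x) :
    HasSum (fun n : ℤ => besselI n.natAbs x) (exp x) := by
  simpa using hasSum_mul_besselI_natAbs (fun _ => 1)
    (by simpa using hasSum_pow_add_div_factorial_mul_factorial hx)

theorem hasSum_sq_mul_besselI_natAbs {x : ℝ} (hx : 0 ≤ x) :
    HasSum (fun n : ℤ => (n : ℝ) ^ 2 * besselI n.natAbs x) (x * exp x) :=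
  hasSum_mul_besselI_natAbs (fun n => (n : ℝ) ^ 2)
    ((hasSum_sub_sq_mul_pow_add_div_factorial_mul_factorial hx).congr_fun fun z => by
      push_cast
      ring)

theorem hasSum_exp_neg_mul_besselI_natAbs {x : ℝ} (hx : 0 ≤ x) :
    HasSum (fun n : ℤ => exp (-x) * besselI n.natAbs x) 1 := by
  simpa [← exp_add] using (hasSum_besselI_natAbs hx).mul_left (exp (-x))

theorem hasSum_sq_mul_exp_neg_mul_besselI_natAbs {x : ℝ} (hx : 0 ≤ x) :
    HasSum (fun n : ℤ => (n : ℝ) ^ 2 * (exp (-x) * besselI n.natAbs x)) x := by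
  have h := (hasSum_sq_mul_besselI_natAbs hx).mul_left (exp (-x))
  rw [mul_left_comm, ← exp_add, neg_add_cancel, exp_zero, mul_one] at h
  exact h.congr_fun fun n => by ring

theorem Summable.of_sq_le_mul {ι : Type*} {r f g : ι → ℝ} (hf : Summable f) (hg : Summable g)
    (hf0 : ∀ i, 0 ≤ f i) (hg0 : ∀ i, 0 ≤ g i) (hr : ∀ i, r i ^ 2 ≤ f i * g i) : Summable r := by
  refine ((hf.add hg).div_const 2).of_norm_bounded fun i => ?_
  refine abs_le_of_sq_le_sq ?_ (by linarith [hf0 i, hg0 i])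
  nlinarith [hr i, sq_nonneg (f i - g i)]

theorem tsum_sq_le_tsum_mul_tsum_of_sq_le_mul {ι : Type*} {r f g : ι → ℝ} (hf : Summable f)
    (hg : Summable g) (hf0 : ∀ i, 0 ≤ f i) (hg0 : ∀ i, 0 ≤ g i) (hr : ∀ i, r i ^ 2 ≤ f i * g i) :
    (∑' i, r i) ^ 2 ≤ (∑' i, f i) * ∑' i, g i := by
  have hsum := (hf.of_sq_le_mul hg hf0 hg0 hr).hasSum
  refine le_of_tendsto' (((continuous_pow 2).tendsto _).comp hsum) fun s => ?_
  calc (∑ i ∈ s, r i) ^ 2 ≤ (∑ i ∈ s, f i) * ∑ i ∈ s, g i :=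
        Finset.sum_sq_le_sum_mul_sum_of_sq_le_mul s (fun i _ => hf0 i) (fun i _ => hg0 i)
          fun i _ => hr i
    _ ≤ (∑' i, f i) * ∑' i, g i :=
        mul_le_mul (hf.sum_le_tsum s fun i _ => hf0 i) (hg.sum_le_tsum s fun i _ => hg0 i)
          (Finset.sum_nonneg fun i _ => hg0 i) (tsum_nonneg hf0)

theorem summable_abs_mul_mul_and_tsum_le_sqrt {ι : Type*} {β u c : ι → ℝ} {s : ℝ}
    (hc0 : ∀ i, 0 ≤ c i) (hu : HasSum (fun i => u i ^ 2 * c i) s)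
    (hβ : Summable fun i => β i ^ 2 * c i) (hβ1 : ∑' i, β i ^ 2 * c i ≤ 1) :
    Summable (fun i => |u i| * (β i * c i)) ∧ ∑' i, |u i| * (β i * c i) ≤ √s := by
  have hβ0 (i : ι) : 0 ≤ β i ^ 2 * c i := mul_nonneg (sq_nonneg _) (hc0 i)
  have hu0 (i : ι) : 0 ≤ u i ^ 2 * c i := mul_nonneg (sq_nonneg _) (hc0 i)
  have hsq (i : ι) : (|u i| * (β i * c i)) ^ 2 ≤ (β i ^ 2 * c i) * (u i ^ 2 * c i) :=
    le_of_eq (by rw [mul_pow, sq_abs]; ring)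
  refine ⟨hβ.of_sq_le_mul hu.summable hβ0 hu0 hsq, le_sqrt_of_sq_le ?_⟩
  calc (∑' i, |u i| * (β i * c i)) ^ 2 ≤ (∑' i, β i ^ 2 * c i) * ∑' i, u i ^ 2 * c i :=
        tsum_sq_le_tsum_mul_tsum_of_sq_le_mul hβ hu.summable hβ0 hu0 hsq
    _ ≤ s := by
        rw [hu.tsum_eq]
        exact mul_le_of_le_one_left (hu.nonneg hu0) hβ1

theorem norm_exp_neg_two_pi_mul_I (n : ℤ) (t : ℝ) :
    ‖Complex.exp (-(2 * π * n * t) * Complex.I)‖ = 1 := by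
  rw [Complex.norm_exp]
  simp

theorem norm_exp_neg_two_pi_mul_I_sub_le (n : ℤ) (t s : ℝ) :
    ‖Complex.exp (-(2 * π * n * t) * Complex.I) - Complex.exp (-(2 * π * n * s) * Complex.I)‖
      ≤ 2 * π * |(n : ℝ)| * |t - s| := by
  have hfactor : Complex.exp (-(2 * π * n * t) * Complex.I)
      - Complex.exp (-(2 * π * n * s) * Complex.I)
      = Complex.exp ((-(2 * π * n * s) : ℝ) * Complex.I)
        * (Complex.exp (Complex.I * (-(2 * π * n * (t - s)) : ℝ)) - 1) := by
    rw [mul_sub, ← Complex.exp_add]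
    push_cast
    ring_nf
  rw [hfactor, norm_mul, Complex.norm_exp_ofReal_mul_I, one_mul]
  refine (Real.norm_exp_I_mul_ofReal_sub_one_le).trans_eq ?_
  rw [Real.norm_eq_abs, abs_neg, abs_mul, abs_mul, abs_mul, abs_two, abs_of_pos pi_pos]

theorem norm_tsum_mul_exp_le {d : ℤ → ℂ} (hd : Summable fun n : ℤ => ‖d n‖) (t : ℝ) :
    ‖∑' n : ℤ, d n * Complex.exp (-(2 * π * n * t) * Complex.I)‖ ≤ ∑' n : ℤ, ‖d n‖ :=
  tsum_of_norm_bounded hd.hasSum fun n => by rw [norm_mul, norm_exp_neg_two_pi_mul_I, mul_one]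

theorem norm_tsum_mul_exp_sub_tsum_mul_exp_le {d : ℤ → ℂ} (hd : Summable fun n : ℤ => ‖d n‖)
    (hnd : Summable fun n : ℤ => |(n : ℝ)| * ‖d n‖) (t s : ℝ) :
    ‖∑' n : ℤ, d n * Complex.exp (-(2 * π * n * t) * Complex.I)
        - ∑' n : ℤ, d n * Complex.exp (-(2 * π * n * s) * Complex.I)‖
      ≤ 2 * π * |t - s| * ∑' n : ℤ, |(n : ℝ)| * ‖d n‖ := by
  have hsum (u : ℝ) : Summable fun n : ℤ => d n * Complex.exp (-(2 * π * n * u) * Complex.I) :=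
    .of_norm (hd.congr fun n => by rw [norm_mul, norm_exp_neg_two_pi_mul_I, mul_one])
  rw [← (hsum t).tsum_sub (hsum s)]
  refine tsum_of_norm_bounded (hnd.hasSum.mul_left (2 * π * |t - s|)) fun n => ?_
  rw [← mul_sub, norm_mul]
  calc ‖d n‖ * ‖_‖ ≤ ‖d n‖ * (2 * π * |(n : ℝ)| * |t - s|) :=
        mul_le_mul_of_nonneg_left (norm_exp_neg_two_pi_mul_I_sub_le n t s) (norm_nonneg _)
    _ = 2 * π * |t - s| * (|(n : ℝ)| * ‖d n‖) := by ring

/-- Elements of the unit ball of the RKHS of the SEP Gaussian process with rescaling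
factor `a` are nearly constant for small `a`: if `h` is the real part of
`t ↦ ∑_{n∈ℤ} b_n e^{−2a²} I_{|n|}(2a²) e^{−2πint}` with
`∑_{n∈ℤ} |b_n|² e^{−2a²} I_{|n|}(2a²) ≤ 1`, then `|h(0)| ≤ 1` and
`|h(t) − h(0)| ≤ 2√2 π a t` for every `t ∈ [0, 1]`. -/
theorem sep_rkhs_unit_ball_nearly_constant (a : ℝ) (ha : 0 < a) (b : ℤ → ℂ)
    (hsum : Summable (fun n : ℤ =>
      ‖b n‖ ^ 2 * (Real.exp (-(2 * a ^ 2)) * besselI n.natAbs (2 * a ^ 2))))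
    (hball : ∑' n : ℤ,
      ‖b n‖ ^ 2 * (Real.exp (-(2 * a ^ 2)) * besselI n.natAbs (2 * a ^ 2)) ≤ 1)
    (h : ℝ → ℝ)
    (hdef : ∀ t : ℝ, h t =
      (∑' n : ℤ, b n * ((Real.exp (-(2 * a ^ 2)) * besselI n.natAbs (2 * a ^ 2) : ℝ) : ℂ) *
        Complex.exp (-(2 * π * n * t) * Complex.I)).re) :
    |h 0| ≤ 1 ∧ ∀ t ∈ Set.Icc (0 : ℝ) 1, |h t - h 0| ≤ 2 * Real.sqrt 2 * π * a * t := by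
  set x := 2 * a ^ 2
  have hx : 0 ≤ x := by positivity
  set c : ℤ → ℝ := fun n => exp (-x) * besselI n.natAbs x
  have hc0 (n : ℤ) : 0 ≤ c n := mul_nonneg (exp_pos _).le (besselI_nonneg _ hx)
  have hd (n : ℤ) : ‖b n * (c n : ℂ)‖ = ‖b n‖ * c n := by
    rw [norm_mul, Complex.norm_real, Real.norm_of_nonneg (hc0 n)]
  obtain ⟨hd_sum, hd_le⟩ := summable_abs_mul_mul_and_tsum_le_sqrt (u := fun _ => 1) hc0
    (by simpa using hasSum_exp_neg_mul_besselI_natAbs hx) hsum hball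
  obtain ⟨hnd_sum, hnd_le⟩ := summable_abs_mul_mul_and_tsum_le_sqrt (u := fun n : ℤ => (n : ℝ))
    hc0 (hasSum_sq_mul_exp_neg_mul_besselI_natAbs hx) hsum hball
  simp only [abs_one, one_mul, sqrt_one] at hd_sum hd_le
  simp_rw [← hd] at hd_sum hd_le hnd_sum hnd_le
  refine ⟨?_, fun t ⟨ht0, _⟩ => ?_⟩
  · rw [hdef 0]
    exact (Complex.abs_re_le_norm _).trans ((norm_tsum_mul_exp_le hd_sum 0).trans hd_le)
  · rw [hdef t, hdef 0, ← Complex.sub_re]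
    refine (Complex.abs_re_le_norm _).trans
      ((norm_tsum_mul_exp_sub_tsum_mul_exp_le hd_sum hnd_sum t 0).trans ?_)
    rw [sub_zero, abs_of_nonneg ht0]
    calc 2 * π * t * ∑' n : ℤ, |(n : ℝ)| * ‖b n * (c n : ℂ)‖ ≤ 2 * π * t * √x := by gcongr
      _ = 2 * √2 * π * a * t := by rw [sqrt_mul zero_le_two, sqrt_sq ha.le]; ring
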